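/- Fix d ∈ ℕ and an integer 0 ≤ q ≤ d. Let X ⊆ Y be bounded cubical sets in ℝ^d, and suppose the set Y \ X ⊆ ℝ^d is covered by v elementary d-cubes (i.e., there are elementary d-cubes Q₁, …, Q_v with Y \ X ⊆ Q₁ ∪ ⋯ ∪ Q_v). Then #(K^d_q(Y) \ K^d_q(X)) ≤ (d choose q)·2^{d−q}·v. In particular, #(K^d(Y) \ K^d(X)) ≤ 3^d·v, where K^d(Z) denotes the set of all elementary cubes contained in a cubical set Z. -/

import Mathlib

/-!
An elementary cube `Q ⊆ Y` with `Q ⊄ X` has its center in `Y \ X`: an elementary cube that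
contains the center of `Q` contains all of `Q`, and `X` is a union of elementary cubes. So the
center lies in some covering cube `∏ⱼ [lⱼ, lⱼ + 1]`, and then in each coordinate the interval of
`Q` is one of `[lⱼ, lⱼ + 1]`, `{lⱼ}`, `{lⱼ + 1}`. Thus `Q` is determined by the index of the
covering cube and a word in three letters of length `d`, exactly `q` of whose letters stand for
`[lⱼ, lⱼ + 1]` when `dim Q = q`: there are `(d choose q) 2^(d-q)` such words, and `3^d` words
in all.
-/

namespace Cubical

/-- An elementary interval: `[l, l+1]` (nondegenerate) or `{l}` (degenerate), `l ∈ ℤ`. -/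
def IsElemInterval (I : Set ℝ) : Prop :=
  ∃ l : ℤ, I = Set.Icc (l : ℝ) ((l : ℝ) + 1) ∨ I = {(l : ℝ)}

/-- An elementary `q`-cube in `ℝ^d`: a product of `d` elementary intervals, exactly `q`
of which are nondegenerate. -/
def IsElemCube (d q : ℕ) (Q : Set (Fin d → ℝ)) : Prop :=
  ∃ I : Fin d → Set ℝ, (∀ i, IsElemInterval (I i)) ∧
    Nat.card {i : Fin d // ∃ l : ℤ, I i = Set.Icc (l : ℝ) ((l : ℝ) + 1)} = q ∧
    Q = Set.pi Set.univ I

/-- An elementary cube in `ℝ^d` (of some dimension). -/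
def IsCube (d : ℕ) (Q : Set (Fin d → ℝ)) : Prop := ∃ q, IsElemCube d q Q

/-- A bounded cubical set in `ℝ^d`: a finite union of elementary cubes. -/
def IsBoundedCubical (d : ℕ) (X : Set (Fin d → ℝ)) : Prop :=
  ∃ 𝒬 : Finset (Set (Fin d → ℝ)), (∀ Q ∈ 𝒬, IsCube d Q) ∧ X = ⋃ Q ∈ 𝒬, (Q : Set (Fin d → ℝ))

open Finset

def elemInterval (p : ℤ × Bool) : Set ℝ :=
  if p.2 then Set.Icc (p.1 : ℝ) (p.1 + 1) else {(p.1 : ℝ)}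

noncomputable def center (p : ℤ × Bool) : ℝ := if p.2 then p.1 + 1 / 2 else p.1

lemma center_mem_elemInterval (p : ℤ × Bool) : center p ∈ elemInterval p := by
  obtain ⟨l, _ | _⟩ := p <;> norm_num [center, elemInterval]

lemma exists_Icc_eq_elemInterval_iff (p : ℤ × Bool) :
    (∃ l : ℤ, elemInterval p = Set.Icc (l : ℝ) (l + 1)) ↔ p.2 := by
  obtain ⟨l, _ | _⟩ := p
  · simp only [elemInterval, Bool.false_eq_true, if_false, iff_false, not_exists]
    intro m h
    have := Set.Icc_eq_singleton_iff.mp h.symm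
    linarith [this.1, this.2]
  · exact iff_of_true ⟨l, rfl⟩ rfl

/-- The three elementary intervals whose centers lie in `[m, m + 1]`. -/
def offset (m : ℤ) : Option Bool → ℤ × Bool
  | none => (m, true)
  | some b => (m + b.toNat, false)

lemma offset_snd (m : ℤ) (o : Option Bool) : (offset m o).2 = o.isNone := by
  cases o <;> rfl

lemma elemInterval_offset_subset (m : ℤ) (o : Option Bool) :
    elemInterval (offset m o) ⊆ Set.Icc (m : ℝ) (m + 1) := by
  rcases o with _ | _ | _ <;> norm_num [offset, elemInterval]

lemma exists_offset_eq_of_center_mem_Icc {p : ℤ × Bool} {m : ℤ}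
    (h : center p ∈ Set.Icc (m : ℝ) (m + 1)) : ∃ o, offset m o = p := by
  obtain ⟨l, _ | _⟩ := p
  · norm_num [center] at h
    obtain ⟨h₁, h₂⟩ := h
    have h₁ : m ≤ l := by exact_mod_cast h₁
    have h₂ : l ≤ m + 1 := by exact_mod_cast h₂
    rcases (by omega : l = m ∨ l = m + 1) with rfl | rfl
    · exact ⟨some false, by simp [offset]⟩
    · exact ⟨some true, by simp [offset]⟩
  · norm_num [center] at h
    obtain ⟨h₁, h₂⟩ := h
    have h₁ : m < l + 1 := by exact_mod_cast (by linarith : (m : ℝ) < l + 1)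
    have h₂ : l < m + 1 := by exact_mod_cast (by linarith : (l : ℝ) < m + 1)
    exact ⟨none, by simp [offset]; omega⟩

lemma elemInterval_subset_of_center_mem {p r : ℤ × Bool} (h : center p ∈ elemInterval r) :
    elemInterval p ⊆ elemInterval r := by
  obtain ⟨m, _ | _⟩ := r
  · obtain ⟨l, _ | _⟩ := p
    · simp_all [center, elemInterval]
    · norm_num [center, elemInterval] at h
      have : (2 * l + 1 : ℤ) = 2 * m := by
        exact_mod_cast (by linarith : (2 * l + 1 : ℝ) = 2 * m)
      omega
  · obtain ⟨o, rfl⟩ := exists_offset_eq_of_center_mem_Icc h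
    exact elemInterval_offset_subset m o

section Cube

variable {d : ℕ}

def elemCube (f : Fin d → ℤ × Bool) : Set (Fin d → ℝ) :=
  Set.univ.pi fun j => elemInterval (f j)

noncomputable def cubeCenter (f : Fin d → ℤ × Bool) : Fin d → ℝ := fun j => center (f j)

lemma cubeCenter_mem_elemCube (f : Fin d → ℤ × Bool) : cubeCenter f ∈ elemCube f :=
  fun j _ => center_mem_elemInterval (f j)

lemma IsElemCube.exists_eq_elemCube {q : ℕ} {Q : Set (Fin d → ℝ)} (hQ : IsElemCube d q Q) :
    ∃ f : Fin d → ℤ × Bool, #{j | (f j).2} = q ∧ Q = elemCube f := by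
  obtain ⟨I, hI, rfl, rfl⟩ := hQ
  have hcode (j : Fin d) : ∃ p, elemInterval p = I j := by
    obtain ⟨l, h | h⟩ := hI j
    · exact ⟨(l, true), h.symm⟩
    · exact ⟨(l, false), h.symm⟩
  choose f hf using hcode
  obtain rfl : (fun j => elemInterval (f j)) = I := funext hf
  refine ⟨f, ?_, rfl⟩
  simp only [exists_Icc_eq_elemInterval_iff]
  rw [Nat.card_eq_fintype_card, Fintype.card_subtype]

lemma IsElemCube.exists_eq_elemCube_Icc {Q : Set (Fin d → ℝ)} (hQ : IsElemCube d d Q) :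
    ∃ l : Fin d → ℤ, Q = elemCube fun j => (l j, true) := by
  obtain ⟨f, hf, rfl⟩ := hQ.exists_eq_elemCube
  have hf' : ∀ j, (f j).2 := by
    simpa using card_filter_eq_iff.mp (hf.trans (card_fin d).symm)
  exact ⟨fun j => (f j).1, congrArg elemCube (funext fun j => Prod.ext rfl (hf' j))⟩

lemma IsBoundedCubical.elemCube_subset_of_cubeCenter_mem {X : Set (Fin d → ℝ)}
    (hX : IsBoundedCubical d X) {f : Fin d → ℤ × Bool} (h : cubeCenter f ∈ X) :
    elemCube f ⊆ X := by
  obtain ⟨𝒬, h𝒬, rfl⟩ := hX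
  obtain ⟨R, hR𝒬, hfR⟩ := Set.mem_iUnion₂.mp h
  obtain ⟨g, -, rfl⟩ := (h𝒬 R hR𝒬).choose_spec.exists_eq_elemCube
  refine (Set.pi_mono fun j _ => ?_).trans (Set.subset_biUnion_of_mem hR𝒬)
  exact elemInterval_subset_of_center_mem (hfR j trivial)

lemma exists_offset_eq_of_cubeCenter_mem {f : Fin d → ℤ × Bool} {l : Fin d → ℤ}
    (h : cubeCenter f ∈ elemCube fun j => (l j, true)) :
    ∃ σ : Fin d → Option Bool, (fun j => offset (l j) (σ j)) = f := by
  choose σ hσ using fun j => exists_offset_eq_of_center_mem_Icc (h j trivial)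
  exact ⟨σ, funext hσ⟩

lemma exists_elemCube_offset_eq {ι : Type*} {X Y : Set (Fin d → ℝ)} {L : ι → Fin d → ℤ}
    (hX : IsBoundedCubical d X) (hcover : Y \ X ⊆ ⋃ i, elemCube fun j => (L i j, true))
    {q : ℕ} {Q : Set (Fin d → ℝ)} (hQ : IsElemCube d q Q) (hQY : Q ⊆ Y) (hQX : ¬Q ⊆ X) :
    ∃ i, ∃ σ : Fin d → Option Bool,
      #{j | σ j = none} = q ∧ elemCube (fun j => offset (L i j) (σ j)) = Q := by
  obtain ⟨f, rfl, rfl⟩ := hQ.exists_eq_elemCube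
  have hc : cubeCenter f ∈ Y \ X :=
    ⟨hQY (cubeCenter_mem_elemCube f), fun h => hQX (hX.elemCube_subset_of_cubeCenter_mem h)⟩
  obtain ⟨i, hi⟩ := Set.mem_iUnion.mp (hcover hc)
  obtain ⟨σ, rfl⟩ := exists_offset_eq_of_cubeCenter_mem hi
  exact ⟨i, σ, by simp [offset_snd], rfl⟩

end Cube

section Count

variable (ι α : Type*) [Fintype ι] [DecidableEq ι] [Fintype α]

lemma card_filter_eq_none_eq (S : Finset ι) :
    #{σ : ι → Option α | ({j | σ j = none} : Finset ι) = S} =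
      Fintype.card α ^ (Fintype.card ι - #S) := by
  calc _ = #(Fintype.piFinset fun j =>
          if j ∈ S then {none} else (univ : Finset α).map .some) := by
        congr 1
        ext σ
        simp only [Finset.ext_iff, mem_filter, mem_univ, true_and, Fintype.mem_piFinset]
        refine forall_congr' fun j => ?_
        by_cases hj : j ∈ S <;> cases σ j <;> simp [hj]
    _ = Fintype.card α ^ (Fintype.card ι - #S) := by
        simp [apply_ite card, prod_ite, filter_not, card_univ_sdiff]

lemma card_filter_card_eq_none_eq (q : ℕ) :
    #{σ : ι → Option α | #{j | σ j = none} = q} =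
      (Fintype.card ι).choose q * Fintype.card α ^ (Fintype.card ι - q) := by
  rw [card_eq_sum_card_fiberwise (f := fun σ : ι → Option α => ({j | σ j = none} : Finset ι))
    (t := powersetCard q univ) fun σ hσ => by simpa using hσ]
  have hfiber (S : Finset ι) (hS : S ∈ powersetCard q univ) :
      #{σ ∈ ({σ : ι → Option α | #{j | σ j = none} = q} : Finset _) |
          ({j | σ j = none} : Finset ι) = S} =
        Fintype.card α ^ (Fintype.card ι - q) := by
    rw [mem_powersetCard_univ] at hS
    rw [filter_filter, ← hS, ← card_filter_eq_none_eq]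
    exact congrArg card (filter_congr fun σ _ => and_iff_right_of_imp fun h => congrArg card h)
  rw [sum_congr rfl hfiber, sum_const, card_powersetCard, card_univ, smul_eq_mul]

end Count

lemma natCard_le_card_of_forall_exists {α β : Type*} (T : Finset α) (Φ : α → β) {P : β → Prop}
    (h : ∀ b, P b → ∃ a ∈ T, Φ a = b) : Nat.card {b // P b} ≤ #T := by
  classical
  calc Nat.card {b // P b} ≤ Nat.card (T.image Φ : Set β) :=
        Nat.card_mono (T.image Φ).finite_toSet fun b hb => by simpa using h b hb
    _ ≤ #T := by rw [Nat.card_coe_set_eq, Set.ncard_coe_finset]; exact card_image_le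

theorem card_elemCubes_diff_le (d q v : ℕ)
    (X Y : Set (Fin d → ℝ)) (hX : IsBoundedCubical d X)
    (Qs : Fin v → Set (Fin d → ℝ)) (hQs : ∀ i, IsElemCube d d (Qs i))
    (hcover : Y \ X ⊆ ⋃ i, Qs i) :
    Nat.card {Q' : Set (Fin d → ℝ) // IsElemCube d q Q' ∧ Q' ⊆ Y ∧ ¬Q' ⊆ X} ≤
      d.choose q * 2 ^ (d - q) * v ∧
    Nat.card {Q' : Set (Fin d → ℝ) // IsCube d Q' ∧ Q' ⊆ Y ∧ ¬Q' ⊆ X} ≤ 3 ^ d * v := by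
  choose L hL using fun i => (hQs i).exists_eq_elemCube_Icc
  simp only [hL] at hcover
  let Φ (a : Fin v × (Fin d → Option Bool)) : Set (Fin d → ℝ) :=
    elemCube fun j => offset (L a.1 j) (a.2 j)
  constructor
  · calc _ ≤ #(univ ×ˢ ({σ : Fin d → Option Bool | #{j | σ j = none} = q} : Finset _) :
            Finset (Fin v × _)) := by
          refine natCard_le_card_of_forall_exists _ Φ fun Q ⟨hQ, hQY, hQX⟩ => ?_
          obtain ⟨i, σ, hσ, rfl⟩ := exists_elemCube_offset_eq hX hcover hQ hQY hQX
          exact ⟨(i, σ), by simpa using hσ, rfl⟩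
      _ = d.choose q * 2 ^ (d - q) * v := by
          rw [card_product, card_filter_card_eq_none_eq]
          simp [mul_comm]
  · calc _ ≤ #(univ : Finset (Fin v × (Fin d → Option Bool))) := by
          refine natCard_le_card_of_forall_exists _ Φ fun Q ⟨⟨k, hQ⟩, hQY, hQX⟩ => ?_
          obtain ⟨i, σ, -, rfl⟩ := exists_elemCube_offset_eq hX hcover hQ hQY hQX
          exact ⟨(i, σ), mem_univ _, rfl⟩
      _ = 3 ^ d * v := by simp [mul_comm]

end Cubical
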